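/- Let T be the vertex-weighted tree on 7 vertices {m, m1, m2, m3, u1, u2, u3} with edge set {m m1, m m2, m m3, m1 u1, m2 u2, m3 u3}, with real vertex weights μ(m)=μ, μ(m_i)=μ_i', μ(u_i)=μ_i'' for i=1,2,3, and let T' be the vertex-weighted tree on the same weighted vertex set obtained from T by replacing edges m m3 and m1 u1 with edges m u1 and m1 m3. Then VWWI(T') − VWWI(T) = (μ + μ_2' + μ_2'' − μ_1')(μ_3' + μ_3'' − μ_1''). -/

import Mathlib

/-!
The distances in both trees are read off explicit tables. A table `D` is the distance function
of a graph as soon as it vanishes exactly on the diagonal, grows by at most one along each edge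
(so every walk is at least as long as `D` predicts), and every off-diagonal entry drops by one
along some edge (so a walk of length `D u v` exists). With the distances known, the claimed
difference is a polynomial identity in the weights.
-/

/-- The vertex-weighted Wiener index: `(1/2) ∑_{u,v} μ(u) μ(v) d_G(u,v)`. -/
noncomputable def VWWI {V : Type*} [Fintype V] (G : SimpleGraph V) (μ : V → ℝ) : ℝ :=
  (1 / 2) * ∑ u : V, ∑ v : V, μ u * μ v * (G.dist u v : ℝ)

/-- The tree `T` on vertices `m = 0, m₁ = 1, m₂ = 2, m₃ = 3, u₁ = 4, u₂ = 5, u₃ = 6`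
with edges `m m₁, m m₂, m m₃, m₁ u₁, m₂ u₂, m₃ u₃`. -/
def Ttree : SimpleGraph (Fin 7) :=
  SimpleGraph.fromEdgeSet {s(0, 1), s(0, 2), s(0, 3), s(1, 4), s(2, 5), s(3, 6)}

/-- The tree `T'` obtained from `T` by replacing edges `m m₃` and `m₁ u₁`
with edges `m u₁` and `m₁ m₃`. -/
def Ttree' : SimpleGraph (Fin 7) :=
  SimpleGraph.fromEdgeSet {s(0, 1), s(0, 2), s(0, 4), s(1, 3), s(2, 5), s(3, 6)}

namespace SimpleGraph

variable {V : Type*} {G : SimpleGraph V}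

lemma le_add_length_of_adj_le {f : V → ℕ} (hf : ∀ a b, G.Adj a b → f b ≤ f a + 1) :
    ∀ {a c : V} (p : G.Walk a c), f c ≤ f a + p.length
  | _, _, .nil => by simp
  | _, _, .cons hadj p => by
    have ih := le_add_length_of_adj_le hf p
    have hstep := hf _ _ hadj
    simp only [Walk.length_cons]
    omega

lemma le_dist_of_adj_le {f : V → ℕ} (hf : ∀ a b, G.Adj a b → f b ≤ f a + 1) {u v : V}
    (hu : f u = 0) (huv : G.Reachable u v) : f v ≤ G.dist u v := by
  obtain ⟨p, hp⟩ := huv.exists_walk_length_eq_dist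
  simpa [hu, hp] using le_add_length_of_adj_le hf p

lemma exists_walk_length_of_descent {v : V} (f : V → ℕ) (hv : f v = 0)
    (hzero : ∀ u, f u = 0 → u = v)
    (hdescent : ∀ u, u ≠ v → ∃ w, G.Adj u w ∧ f u = f w + 1) :
    ∀ u, ∃ p : G.Walk u v, p.length = f u := by
  suffices ∀ n u, f u = n → ∃ p : G.Walk u v, p.length = n from fun u => this _ u rfl
  intro n
  induction n with
  | zero =>
    rintro u hu
    obtain rfl := hzero u hu
    exact ⟨.nil, rfl⟩
  | succ n ih =>
    rintro u hu
    have huv : u ≠ v := by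
      rintro rfl
      omega
    obtain ⟨w, hw, hfw⟩ := hdescent u huv
    obtain ⟨p, hp⟩ := ih w (by omega)
    exact ⟨.cons hw p, by simp [hp]⟩

lemma dist_eq_of_table (D : V → V → ℕ) (hdiag : ∀ u, D u u = 0)
    (hzero : ∀ u v, D u v = 0 → u = v)
    (hdescent : ∀ u v, u ≠ v → ∃ w, G.Adj u w ∧ D u v = D w v + 1)
    (hlip : ∀ u a b, G.Adj a b → D u b ≤ D u a + 1) (u v : V) :
    G.dist u v = D u v := by
  obtain ⟨p, hp⟩ := exists_walk_length_of_descent (D · v) (hdiag v) (hzero · v) (hdescent · v) u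
  refine le_antisymm (hp ▸ dist_le p) ?_
  exact le_dist_of_adj_le (hlip u) (hdiag u) ⟨p⟩

end SimpleGraph

def distTableT : Fin 7 → Fin 7 → ℕ :=
  !![0,1,1,1,2,2,2;
     1,0,2,2,1,3,3;
     1,2,0,2,3,1,3;
     1,2,2,0,3,3,1;
     2,1,3,3,0,4,4;
     2,3,1,3,4,0,4;
     2,3,3,1,4,4,0]

def distTableT' : Fin 7 → Fin 7 → ℕ :=
  !![0,1,1,2,1,2,3;
     1,0,2,1,2,3,2;
     1,2,0,3,2,1,4;
     2,1,3,0,3,4,1;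
     1,2,2,3,0,3,4;
     2,3,1,4,3,0,5;
     3,2,4,1,4,5,0]

lemma Ttree_dist (u v : Fin 7) : Ttree.dist u v = distTableT u v := by
  refine SimpleGraph.dist_eq_of_table _ (by decide) (by decide) ?_ ?_ u v <;>
  simp only [Ttree, SimpleGraph.fromEdgeSet_adj, Set.mem_insert_iff, Set.mem_singleton_iff] <;>
  decide

lemma Ttree'_dist (u v : Fin 7) : Ttree'.dist u v = distTableT' u v := by
  refine SimpleGraph.dist_eq_of_table _ (by decide) (by decide) ?_ ?_ u v <;>
  simp only [Ttree', SimpleGraph.fromEdgeSet_adj, Set.mem_insert_iff, Set.mem_singleton_iff] <;>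
  decide

theorem VWWI_diff (μ μ₁' μ₂' μ₃' μ₁'' μ₂'' μ₃'' : ℝ) :
    VWWI Ttree' ![μ, μ₁', μ₂', μ₃', μ₁'', μ₂'', μ₃''] -
      VWWI Ttree ![μ, μ₁', μ₂', μ₃', μ₁'', μ₂'', μ₃''] =
      (μ + μ₂' + μ₂'' - μ₁') * (μ₃' + μ₃'' - μ₁'') := by
  simp only [VWWI, Ttree_dist, Ttree'_dist, distTableT, distTableT', Fin.sum_univ_succ,
    Fin.sum_univ_zero, Matrix.cons_val_zero, Matrix.cons_val_succ, Matrix.of_apply]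
  push_cast
  ring
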